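/- arXiv:2506.16789 — 8 statements merged into one kernel-verified Lean document; each statement's English description precedes it below -/
import Mathlib

section
/- A finite simple graph Γ is isomorphic to the double D(Γ') of some graph Γ' (where D(Γ') has vertex set Γ'×{0,1} and edges (v,ε)–(w,δ) for every edge v–w of Γ' and all ε,δ∈{0,1}) if and only if every twin module of Γ has even order. -/
/-!
Twins are interchangeable: an isomorphism carries twin modules to twin modules, and the twin
module of `(v, ε)` in a double is the twin module of `v` times `Bool`, so in a double every twin
module has even order. Conversely, if every twin module has even order, split each of them into
two halves of equal size; this gives `V ≃ W × Bool` such that `(a, true)` and `(a, false)` are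
always twins, and `G` is then the double of the graph that it induces on `W × {false}`.
-/

/-- The double of a graph: vertex set `V × Bool`, with `(v,ε)` adjacent to `(w,δ)`
iff `v` and `w` are adjacent. -/
def GraphDouble {V : Type*} (G : SimpleGraph V) : SimpleGraph (V × Bool) where
  Adj p q := G.Adj p.1 q.1
  symm := ⟨fun _ _ h => G.adj_symm h⟩
  loopless := ⟨fun p h => G.irrefl (v := p.1) h⟩

namespace SimpleGraph

variable {V W : Type*}

def twinModule (G : SimpleGraph V) (v : V) : Set V :=
  {w | G.neighborSet w = G.neighborSet v}

theorem adj_congr_of_neighborSet_eq {G : SimpleGraph V} {v v' w w' : V}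
    (hv : G.neighborSet v = G.neighborSet v') (hw : G.neighborSet w = G.neighborSet w') :
    G.Adj v w ↔ G.Adj v' w' := by
  rw [← mem_neighborSet, hv, mem_neighborSet, adj_comm, ← mem_neighborSet, hw,
    mem_neighborSet, adj_comm]

theorem Iso.preimage_twinModule {G : SimpleGraph V} {H : SimpleGraph W} (e : G ≃g H) (v : V) :
    e ⁻¹' H.twinModule (e v) = G.twinModule v := by
  ext w
  simp only [twinModule, Set.mem_preimage, Set.mem_ofPred_eq, ← e.image_neighborSet,
    (Set.image_injective.mpr e.injective).eq_iff]

theorem Iso.ncard_twinModule {G : SimpleGraph V} {H : SimpleGraph W} (e : G ≃g H) (v : V) :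
    (H.twinModule (e v)).ncard = (G.twinModule v).ncard := by
  rw [← e.preimage_twinModule, Set.ncard_preimage_of_injective_subset_range e.injective
    (by simp [e.surjective.range_eq])]

theorem twinModule_graphDouble (G : SimpleGraph V) (p : V × Bool) :
    (GraphDouble G).twinModule p = G.twinModule p.1 ×ˢ Set.univ := by
  ext q
  simp only [twinModule, Set.mem_ofPred_eq, Set.mem_prod, Set.mem_univ, and_true, Set.ext_iff,
    mem_neighborSet, GraphDouble, Prod.forall]
  exact ⟨fun h w => h w true, fun h w _ => h w⟩

theorem even_ncard_twinModule_graphDouble (G : SimpleGraph V) (p : V × Bool) :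
    Even ((GraphDouble G).twinModule p).ncard := by
  rw [twinModule_graphDouble, Set.ncard_prod, Set.ncard_univ, Nat.card_eq_fintype_card,
    Fintype.card_bool]
  exact even_two.mul_left _

def isoGraphDoubleOfEquiv (G : SimpleGraph V) (e : V ≃ W × Bool)
    (he : ∀ a, G.neighborSet (e.symm (a, true)) = G.neighborSet (e.symm (a, false))) :
    G ≃g GraphDouble (G.comap fun a => e.symm (a, false)) where
  toEquiv := e
  map_rel_iff' {v w} := by
    have twin (a : W) (b : Bool) :
        G.neighborSet (e.symm (a, false)) = G.neighborSet (e.symm (a, b)) := by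
      cases b
      · rfl
      · exact (he a).symm
    have h := adj_congr_of_neighborSet_eq (twin (e v).1 (e v).2) (twin (e w).1 (e w).2)
    simp only [Prod.mk.eta, Equiv.symm_apply_apply] at h
    exact h

end SimpleGraph

theorem Finite.nonempty_equiv_fin_prod_bool {α : Type*} [Finite α] (h : Even (Nat.card α)) :
    Nonempty (α ≃ Fin (Nat.card α / 2) × Bool) := by
  rw [← Finite.card_eq, Nat.card_prod, Nat.card_eq_fintype_card (α := Bool), Fintype.card_bool,
    Nat.card_fin, Nat.div_mul_cancel h.two_dvd]

theorem exists_equiv_prod_bool_of_even_fibers {V ι : Type*} [Finite V] (π : V → ι)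
    (h : ∀ v, Even {w | π w = π v}.ncard) :
    ∃ (W : Type) (e : V ≃ W × Bool), ∀ a, π (e.symm (a, true)) = π (e.symm (a, false)) := by
  have hfiber (i : ι) : Even (Nat.card {v // π v = i}) := by
    by_cases hi : ∃ v, π v = i
    · obtain ⟨v, rfl⟩ := hi
      exact h v
    · have : IsEmpty {v // π v = i} := ⟨fun v => hi ⟨v.1, v.2⟩⟩
      simp
  let halve (i : ι) := (Finite.nonempty_equiv_fin_prod_bool (hfiber i)).some
  let W := Σ i, Fin (Nat.card {v // π v = i} / 2)
  let e : V ≃ W × Bool := (Equiv.sigmaFiberEquiv π).symm.trans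
    ((Equiv.sigmaCongrRight halve).trans (Equiv.sigmaProdDistrib _ _).symm)
  have he (a : W) (b : Bool) : π (e.symm (a, b)) = a.1 :=
    ((halve a.1).symm (a.2, b)).2
  -- `W` lives in the universe of `ι`; re-indexing it by `Fin` brings it down to `Type`.
  have : Finite (W × Bool) := .of_equiv V e
  have : Finite W := .prod_left Bool
  let f := (Finite.equivFin W).prodCongr (Equiv.refl Bool)
  exact ⟨_, e.trans f, fun a => by simp [f, he]⟩

/-- A finite simple graph is isomorphic to the double of some graph iff every twin
module (set of vertices with a fixed common link) has even order. -/
theorem stmt0 {V : Type*} [Fintype V] (G : SimpleGraph V) :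
    (∃ (W : Type) (G' : SimpleGraph W), Nonempty (G ≃g GraphDouble G')) ↔
      ∀ v : V, Even ({w : V | G.neighborSet w = G.neighborSet v}.ncard) := by
  constructor
  · rintro ⟨W, G', ⟨e⟩⟩ v
    change Even (G.twinModule v).ncard
    rw [← e.ncard_twinModule v]
    exact G'.even_ncard_twinModule_graphDouble (e v)
  · intro h
    obtain ⟨W, e, he⟩ := exists_equiv_prod_bool_of_even_fibers G.neighborSet h
    exact ⟨W, _, ⟨G.isoGraphDoubleOfEquiv e he⟩⟩
end

section
/- A triangle in the diagonal graph ⧄(Γ) of a simple graph Γ corresponds to an induced octahedron in Γ: if {a,b}, {c,d}, {e,f} are three pairwise adjacent vertices of ⧄(Γ), then the six vertices a,b,c,d,e,f of Γ induce the octahedron K_{2,2,2}. Consequently, if Γ is triangle-free then ⧄(Γ) is triangle-free. -/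
/-! Three pairwise adjacent diagonals `{a,b}`, `{c,d}`, `{e,f}` make every vertex of one diagonal
adjacent to every vertex of the other two, while each diagonal is a non-edge; adjacency also forces
the six vertices to be distinct. Picking one vertex from each diagonal gives a triangle of `G`. -/

/-- `a,b` and `c,d` are the two diagonals of an induced square (4-cycle) `a–c–b–d` of `G`. -/
def IsInducedSquare {V : Type*} (G : SimpleGraph V) (a b c d : V) : Prop :=
  a ≠ b ∧ c ≠ d ∧ G.Adj a c ∧ G.Adj c b ∧ G.Adj b d ∧ G.Adj d a ∧ ¬ G.Adj a b ∧ ¬ G.Adj c d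

namespace IsInducedSquare

variable {V : Type*} {G : SimpleGraph V} {a b c d x y : V}

theorem ne (h : IsInducedSquare G a b c d) : a ≠ b := h.1

theorem ne' (h : IsInducedSquare G a b c d) : c ≠ d := h.2.1

theorem not_adj (h : IsInducedSquare G a b c d) : ¬ G.Adj a b := h.2.2.2.2.2.2.1

theorem not_adj' (h : IsInducedSquare G a b c d) : ¬ G.Adj c d := h.2.2.2.2.2.2.2

theorem adj_of_mem (h : IsInducedSquare G a b c d) (hx : x ∈ ({a, b} : Set V))
    (hy : y ∈ ({c, d} : Set V)) : G.Adj x y := by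
  obtain ⟨-, -, hac, hcb, hbd, hda, -, -⟩ := h
  rcases hx with rfl | rfl <;> rcases hy with rfl | rfl
  exacts [hac, hda.symm, hcb.symm, hbd]

theorem ne_of_mem (h : IsInducedSquare G a b c d) (hx : x ∈ ({a, b} : Set V))
    (hy : y ∈ ({c, d} : Set V)) : x ≠ y :=
  (h.adj_of_mem hx hy).ne

variable {e f : V}

theorem pairwise_ne_of_triangle (h₁ : IsInducedSquare G a b c d)
    (h₂ : IsInducedSquare G a b e f) (h₃ : IsInducedSquare G c d e f) :
    List.Pairwise (· ≠ ·) [a, b, c, d, e, f] := by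
  simp only [List.pairwise_cons, List.mem_cons, List.not_mem_nil, or_false, forall_eq_or_imp,
    forall_eq, List.Pairwise.nil, false_implies, implies_true, and_true]
  refine ⟨⟨h₁.ne, ?_, ?_, ?_, ?_⟩, ⟨?_, ?_, ?_, ?_⟩, ⟨h₁.ne', ?_, ?_⟩, ⟨?_, ?_⟩, h₂.ne'⟩ <;>
    first
    | (apply h₁.ne_of_mem <;> simp; done)
    | (apply h₂.ne_of_mem <;> simp; done)
    | (apply h₃.ne_of_mem <;> simp)

theorem isNClique_of_triangle [DecidableEq V] (h₁ : IsInducedSquare G a b c d)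
    (h₂ : IsInducedSquare G a b e f) (h₃ : IsInducedSquare G c d e f) :
    G.IsNClique 3 {a, c, e} :=
  SimpleGraph.is3Clique_triple_iff.mpr
    ⟨h₁.adj_of_mem (by simp) (by simp), h₂.adj_of_mem (by simp) (by simp),
      h₃.adj_of_mem (by simp) (by simp)⟩

end IsInducedSquare

/-- A triangle in the diagonal graph corresponds to an induced octahedron `K_{2,2,2}`;
consequently triangle-free graphs have triangle-free diagonal graphs. -/
theorem stmt4 {V : Type*} (G : SimpleGraph V) :
    (∀ a b c d e f : V,
      IsInducedSquare G a b c d → IsInducedSquare G a b e f → IsInducedSquare G c d e f →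
        ((∀ x ∈ ({a, b} : Set V), ∀ y ∈ ({c, d} : Set V), G.Adj x y) ∧
         (∀ x ∈ ({a, b} : Set V), ∀ y ∈ ({e, f} : Set V), G.Adj x y) ∧
         (∀ x ∈ ({c, d} : Set V), ∀ y ∈ ({e, f} : Set V), G.Adj x y) ∧
         ¬ G.Adj a b ∧ ¬ G.Adj c d ∧ ¬ G.Adj e f ∧
         List.Pairwise (· ≠ ·) [a, b, c, d, e, f])) ∧
    (G.CliqueFree 3 → ∀ a b c d e f : V,
      ¬ (IsInducedSquare G a b c d ∧ IsInducedSquare G a b e f ∧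
          IsInducedSquare G c d e f)) := by
  constructor
  · intro a b c d e f h₁ h₂ h₃
    exact ⟨fun _ hx _ hy => h₁.adj_of_mem hx hy, fun _ hx _ hy => h₂.adj_of_mem hx hy,
      fun _ hx _ hy => h₃.adj_of_mem hx hy, h₁.not_adj, h₁.not_adj', h₂.not_adj',
      h₁.pairwise_ne_of_triangle h₂ h₃⟩
  · rintro hG a b c d e f ⟨h₁, h₂, h₃⟩
    classical
    exact hG _ (h₁.isNClique_of_triangle h₂ h₃)
end

section
/- Let Γ be a triangle-free simple graph. If A*B is a join in the diagonal graph ⧄(Γ) (A and B nonempty sets of vertices of ⧄(Γ) with every vertex of A adjacent to every vertex of B), then supp(A)*supp(B) is a thick join subgraph of Γ, where supp(A) is the union of the 2-element vertex sets constituting the vertices of A. -/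
/-- The support of a set of (ordered representatives of) vertices of the diagonal graph. -/
def diagSupp {V : Type*} (S : Set (V × V)) : Set V := {x | ∃ p ∈ S, x = p.1 ∨ x = p.2}

section

variable {V : Type*} {G : SimpleGraph V}

theorem fst_mem_diagSupp {S : Set (V × V)} {p : V × V} (hp : p ∈ S) : p.1 ∈ diagSupp S :=
  ⟨p, hp, Or.inl rfl⟩

theorem snd_mem_diagSupp {S : Set (V × V)} {p : V × V} (hp : p ∈ S) : p.2 ∈ diagSupp S :=
  ⟨p, hp, Or.inr rfl⟩

namespace IsInducedSquare

variable {a b c d : V}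

theorem symm (h : IsInducedSquare G a b c d) : IsInducedSquare G c d a b := by
  obtain ⟨hab, hcd, hac, hcb, hbd, hda, hnab, hncd⟩ := h
  exact ⟨hcd, hab, hac.symm, hda.symm, hbd.symm, hcb.symm, hncd, hnab⟩

theorem adj {x y : V} (h : IsInducedSquare G a b c d) (hx : x = a ∨ x = b)
    (hy : y = c ∨ y = d) : G.Adj x y := by
  obtain ⟨-, -, hac, hcb, hbd, hda, -, -⟩ := h
  rcases hx with rfl | rfl <;> rcases hy with rfl | rfl
  exacts [hac, hda.symm, hcb.symm, hbd]

end IsInducedSquare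

theorem diagSupp_adj_of_forall_isInducedSquare {A B : Set (V × V)}
    (hjoin : ∀ p ∈ A, ∀ q ∈ B, IsInducedSquare G p.1 p.2 q.1 q.2) :
    ∀ x ∈ diagSupp A, ∀ y ∈ diagSupp B, G.Adj x y := by
  rintro x ⟨p, hp, hx⟩ y ⟨q, hq, hy⟩
  exact (hjoin p hp q hq).adj hx hy

theorem exists_not_adj_in_diagSupp {A : Set (V × V)} {p : V × V} {c d : V} (hp : p ∈ A)
    (h : IsInducedSquare G p.1 p.2 c d) :
    ∃ x ∈ diagSupp A, ∃ x' ∈ diagSupp A, x ≠ x' ∧ ¬ G.Adj x x' := by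
  obtain ⟨hne, -, -, -, -, -, hnadj, -⟩ := h
  exact ⟨p.1, fst_mem_diagSupp hp, p.2, snd_mem_diagSupp hp, hne, hnadj⟩

end

theorem stmt6_general {V : Type*} (G : SimpleGraph V)
    (A B : Set (V × V)) (hA : A.Nonempty) (hB : B.Nonempty)
    (hjoin : ∀ p ∈ A, ∀ q ∈ B, IsInducedSquare G p.1 p.2 q.1 q.2) :
    (∀ x ∈ diagSupp A, ∀ y ∈ diagSupp B, G.Adj x y) ∧
    (∃ x ∈ diagSupp A, ∃ x' ∈ diagSupp A, x ≠ x' ∧ ¬ G.Adj x x') ∧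
    (∃ y ∈ diagSupp B, ∃ y' ∈ diagSupp B, y ≠ y' ∧ ¬ G.Adj y y') := by
  obtain ⟨p, hp⟩ := hA
  obtain ⟨q, hq⟩ := hB
  have hsq := hjoin p hp q hq
  exact ⟨diagSupp_adj_of_forall_isInducedSquare hjoin, exists_not_adj_in_diagSupp hp hsq,
    exists_not_adj_in_diagSupp hq hsq.symm⟩

/-- If `A * B` is a join of nonempty sets of vertices of the diagonal graph of a
triangle-free graph `Γ`, then `supp(A) * supp(B)` is a thick join in `Γ`. -/
theorem stmt6 {V : Type*} (G : SimpleGraph V) (htf : G.CliqueFree 3)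
    (A B : Set (V × V)) (hA : A.Nonempty) (hB : B.Nonempty)
    (hjoin : ∀ p ∈ A, ∀ q ∈ B, IsInducedSquare G p.1 p.2 q.1 q.2) :
    (∀ x ∈ diagSupp A, ∀ y ∈ diagSupp B, G.Adj x y) ∧
    (∃ x ∈ diagSupp A, ∃ x' ∈ diagSupp A, x ≠ x' ∧ ¬ G.Adj x x') ∧
    (∃ y ∈ diagSupp B, ∃ y' ∈ diagSupp B, y ≠ y' ∧ ¬ G.Adj y y') :=
  stmt6_general G A B hA hB hjoin
end

section
/- Every incomplete CFS graph with n ≥ 4 vertices has at least 2n − 4 edges. -/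
/-- Adjacency of diagonal pairs in the diagonal graph `⧄(Γ)`. -/
def DiagAdj {V : Type*} (G : SimpleGraph V) (p q : V × V) : Prop :=
  IsInducedSquare G p.1 p.2 q.1 q.2

/-- A cone vertex is adjacent to every other vertex. -/
def IsCone {V : Type*} (G : SimpleGraph V) (v : V) : Prop := ∀ w, w ≠ v → G.Adj v w

/-- `Γ` is CFS if its diagonal graph has a connected component whose support contains
every non-cone vertex of `Γ`. -/
def CFS {V : Type*} (G : SimpleGraph V) : Prop :=
  ∃ p : V × V, (∃ q : V × V, DiagAdj G p q) ∧
    ∀ v : V, ¬ IsCone G v → ∃ q : V × V,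
      Relation.ReflTransGen (DiagAdj G) p q ∧ (v = q.1 ∨ v = q.2)

/-!
Grow a vertex set from a diagonal pair `p` of an induced square, one vertex at a time, always
adding a vertex with two distinct neighbours already present; each new vertex then brings at least
two new edges, so a set `A` grown this way spans at least `2|A| - 4` edges. A step `r → q` of the
diagonal graph adds `q.1` and `q.2`, each adjacent to both ends of `r`, so by the CFS property every
non-cone vertex can be reached; a cone vertex is adjacent to both ends of `p`. Hence the whole
vertex set is grown this way.
-/

open Finset

namespace SimpleGraph

variable {V : Type*} {G : SimpleGraph V}

section EdgesWithin

variable (G) [DecidableRel G.Adj]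

def edgesWithin (A : Finset V) : Finset (Sym2 V) := A.sym2.filter (· ∈ G.edgeSet)

variable {G}

theorem mk_mem_edgesWithin {A : Finset V} {a b : V} :
    s(a, b) ∈ G.edgesWithin A ↔ G.Adj a b ∧ a ∈ A ∧ b ∈ A := by
  simp only [edgesWithin, mem_filter, mk_mem_sym2_iff, mem_edgeSet]
  tauto

theorem edgesWithin_mono {A B : Finset V} (h : A ⊆ B) : G.edgesWithin A ⊆ G.edgesWithin B :=
  filter_subset_filter _ (sym2_mono h)

theorem coe_edgesWithin_univ [Fintype V] :
    (G.edgesWithin univ : Set (Sym2 V)) = G.edgeSet := by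
  ext e
  simp [edgesWithin]

variable [DecidableEq V]

theorem card_edgesWithin_add_two_le {A : Finset V} {x a b : V} (hx : x ∉ A) (ha : a ∈ A)
    (hb : b ∈ A) (hab : a ≠ b) (hxa : G.Adj x a) (hxb : G.Adj x b) :
    #(G.edgesWithin A) + 2 ≤ #(G.edgesWithin (insert x A)) := by
  have hxa_new : s(x, a) ∉ G.edgesWithin A := fun h => hx (mk_mem_edgesWithin.1 h).2.1
  have hxb_new : s(x, b) ∉ G.edgesWithin A := fun h => hx (mk_mem_edgesWithin.1 h).2.1
  have hne : s(x, a) ≠ s(x, b) := by simp [hab, hxb.ne]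
  have hsub : insert s(x, a) (insert s(x, b) (G.edgesWithin A)) ⊆ G.edgesWithin (insert x A) := by
    refine insert_subset ?_ (insert_subset ?_ ?_)
    · exact mk_mem_edgesWithin.2 ⟨hxa, mem_insert_self _ _, mem_insert_of_mem ha⟩
    · exact mk_mem_edgesWithin.2 ⟨hxb, mem_insert_self _ _, mem_insert_of_mem hb⟩
    · exact edgesWithin_mono (subset_insert _ _)
  calc #(G.edgesWithin A) + 2
      = #(insert s(x, a) (insert s(x, b) (G.edgesWithin A))) := by
        rw [card_insert_of_notMem (by simp [hne, hxa_new]),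
          card_insert_of_notMem hxb_new]
    _ ≤ #(G.edgesWithin (insert x A)) := card_le_card hsub

end EdgesWithin

variable [DecidableEq V]

variable (G) in
inductive TwoAttached : Finset V → Prop
  | pair (a b : V) : TwoAttached {a, b}
  | attach {A : Finset V} {x a b : V} (hA : TwoAttached A) (ha : a ∈ A) (hb : b ∈ A)
      (hab : a ≠ b) (hxa : G.Adj x a) (hxb : G.Adj x b) : TwoAttached (insert x A)

theorem TwoAttached.two_mul_card_le [DecidableRel G.Adj] {A : Finset V} (hA : G.TwoAttached A) :
    2 * #A ≤ #(G.edgesWithin A) + 4 := by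
  induction hA with
  | pair a b => have := card_le_two (a := a) (b := b); omega
  | @attach A x a b _ ha hb hab hxa hxb ih =>
    by_cases hx : x ∈ A
    · rwa [insert_eq_of_mem hx]
    · have := card_edgesWithin_add_two_le hx ha hb hab hxa hxb
      rw [card_insert_of_notMem hx]
      omega

theorem TwoAttached.insert_diag {A : Finset V} {r q : V × V} (hA : G.TwoAttached A)
    (hr₁ : r.1 ∈ A) (hr₂ : r.2 ∈ A) (hrq : DiagAdj G r q) :
    G.TwoAttached (insert q.1 (insert q.2 A)) := by
  obtain ⟨hr, -, h₁₁, h₁₂, h₂₂, h₂₁, -, -⟩ := hrq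
  exact (hA.attach hr₁ hr₂ hr h₂₁ h₂₂.symm).attach (mem_insert_of_mem hr₁)
    (mem_insert_of_mem hr₂) hr h₁₁.symm h₁₂

theorem TwoAttached.exists_superset_of_reflTransGen {A : Finset V} {p q : V × V}
    (hA : G.TwoAttached A) (hp₁ : p.1 ∈ A) (hp₂ : p.2 ∈ A)
    (hpq : Relation.ReflTransGen (DiagAdj G) p q) :
    ∃ B, G.TwoAttached B ∧ A ⊆ B ∧ q.1 ∈ B ∧ q.2 ∈ B := by
  induction hpq with
  | refl => exact ⟨A, hA, subset_rfl, hp₁, hp₂⟩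
  | tail _ hrq ih =>
    obtain ⟨B, hB, hAB, hr₁, hr₂⟩ := ih
    exact ⟨_, hB.insert_diag hr₁ hr₂ hrq, hAB.trans ((subset_insert _ _).trans
      (subset_insert _ _)), mem_insert_self _ _,
      mem_insert_of_mem (mem_insert_self _ _)⟩

theorem _root_.CFS.exists_twoAttached_superset [Fintype V] (hG : CFS G) (S : Finset V) :
    ∃ A, G.TwoAttached A ∧ S ⊆ A := by
  obtain ⟨p, ⟨-, hp, -⟩, hreach⟩ := hG
  suffices ∃ A, G.TwoAttached A ∧ p.1 ∈ A ∧ p.2 ∈ A ∧ S ⊆ A by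
    obtain ⟨A, hA, -, -, hSA⟩ := this
    exact ⟨A, hA, hSA⟩
  induction S using Finset.induction with
  | empty => exact ⟨{p.1, p.2}, .pair _ _, by simp, by simp, empty_subset _⟩
  | @insert v S _ ih =>
    obtain ⟨A, hA, hp₁, hp₂, hSA⟩ := ih
    suffices ∃ B, G.TwoAttached B ∧ A ⊆ B ∧ v ∈ B by
      obtain ⟨B, hB, hAB, hv⟩ := this
      exact ⟨B, hB, hAB hp₁, hAB hp₂, insert_subset hv (hSA.trans hAB)⟩
    by_cases hvA : v ∈ A
    · exact ⟨A, hA, subset_rfl, hvA⟩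
    by_cases hcone : IsCone G v
    · exact ⟨_, hA.attach hp₁ hp₂ hp (hcone _ (ne_of_mem_of_not_mem hp₁ hvA))
        (hcone _ (ne_of_mem_of_not_mem hp₂ hvA)), subset_insert _ _,
        mem_insert_self _ _⟩
    · obtain ⟨q, hpq, hvq⟩ := hreach v hcone
      obtain ⟨B, hB, hAB, hq₁, hq₂⟩ := hA.exists_superset_of_reflTransGen hp₁ hp₂ hpq
      exact ⟨B, hB, hAB, by rcases hvq with rfl | rfl <;> assumption⟩

end SimpleGraph

theorem stmt7_general {V : Type*} [Fintype V] (G : SimpleGraph V)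
    (hcfs : CFS G) :
    2 * Fintype.card V - 4 ≤ G.edgeSet.ncard := by
  classical
  obtain ⟨A, hA, hunivA⟩ := hcfs.exists_twoAttached_superset univ
  have hAuniv : A = univ := univ_subset_iff.1 hunivA
  have hcount := hA.two_mul_card_le
  rw [hAuniv, card_univ, ← Set.ncard_coe_finset, SimpleGraph.coe_edgesWithin_univ] at hcount
  omega

/-- An incomplete CFS graph with `n ≥ 4` vertices has at least `2n − 4` edges. -/
theorem stmt7 {V : Type*} [Fintype V] (G : SimpleGraph V)
    (h4 : 4 ≤ Fintype.card V)
    (hinc : ∃ v w : V, v ≠ w ∧ ¬ G.Adj v w)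
    (hcfs : CFS G) :
    2 * Fintype.card V - 4 ≤ G.edgeSet.ncard :=
  stmt7_general G hcfs
end

section
/- A triangle-free graph with n vertices and strictly more than (n−1)²/4 + 1 edges is bipartite. -/
/-!
Induction on the number `n` of vertices of a triangle-free, non-bipartite graph `G`. If some
vertex `v` has degree at most `(n - 2) / 2`, either `G - v` is not bipartite and the bound for
`G - v` plus `deg v` suffices, or `V = {v} ⊔ s ⊔ t` with `s`, `t` independent. Otherwise the
neighbourhoods of the two ends of an edge are disjoint independent sets with at least `n - 1`
vertices together; they cannot cover `V`, so again `V = {w} ⊔ s ⊔ t` with `s`, `t` independent.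

In that situation `w` has `a ≥ 1` neighbours in `s` and `b ≥ 1` in `t`, since `G` is not
bipartite, and no edge joins two of them, since `G` is triangle-free. Hence
`e ≤ |s| |t| - a b + a + b ≤ |s| |t| + 1 ≤ (n - 1)² / 4 + 1`.
-/

open Finset

namespace SimpleGraph

variable {V : Type*} {G : SimpleGraph V}

theorem IsIndepSet.insert {s : Set V} {w : V} (hs : G.IsIndepSet s)
    (hw : ∀ x ∈ s, ¬G.Adj w x) : G.IsIndepSet (insert w s) :=
  Set.pairwise_insert.2 ⟨hs, fun x hx _ => ⟨hw x hx, fun h => hw x hx h.symm⟩⟩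

theorem isBipartite_of_isIndepSet_of_union_eq_univ {s t : Set V} (hs : G.IsIndepSet s)
    (ht : G.IsIndepSet t) (hst : s ∪ t = Set.univ) : G.IsBipartite := by
  classical
  refine ⟨Coloring.mk (fun x => if x ∈ s then 0 else 1) fun {x y} hxy => ?_⟩
  have mem_t : ∀ z ∉ s, z ∈ t := fun z hz => (hst ▸ Set.mem_univ z).resolve_left hz
  by_cases hx : x ∈ s <;> by_cases hy : y ∈ s <;> simp only [hx, hy, if_true, if_false]
  · exact fun _ => hs hx hy hxy.ne hxy
  · decide
  · decide
  · exact fun _ => ht (mem_t x hx) (mem_t y hy) hxy.ne hxy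

theorem isBipartite_of_isIndepSet_of_union_eq_compl_singleton {s t : Set V} {w : V}
    (hs : G.IsIndepSet s) (ht : G.IsIndepSet t) (hst : s ∪ t = {w}ᶜ)
    (hw : ∀ x ∈ t, ¬G.Adj w x) : G.IsBipartite := by
  refine isBipartite_of_isIndepSet_of_union_eq_univ hs (ht.insert hw) ?_
  rw [Set.union_insert, hst, Set.insert_eq, Set.union_compl_self]

theorem exists_isIndepSet_union_eq_compl_singleton [Fintype V] [DecidableEq V] {w : V}
    (h : (G.induce ({w}ᶜ : Set V)).IsBipartite) :
    ∃ s t : Finset V, Disjoint s t ∧ s ∪ t = {w}ᶜ ∧ G.IsIndepSet s ∧ G.IsIndepSet t := by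
  obtain ⟨C⟩ := h
  let c : V → Fin 2 := fun x => if hx : x = w then 0 else C ⟨x, hx⟩
  have hc : ∀ {x y}, G.Adj x y → x ≠ w → y ≠ w → c x ≠ c y := fun hxy hx hy => by
    simp only [c, dif_neg hx, dif_neg hy]
    exact C.valid hxy
  refine ⟨({w}ᶜ : Finset V).filter (c · = 0), ({w}ᶜ : Finset V).filter (c · ≠ 0),
    disjoint_filter_filter_not _ _ _, filter_union_filter_not_eq _ _, ?_, ?_⟩
  all_goals
    intro x hx y hy _ hxy
    simp only [coe_filter, mem_compl, mem_singleton, Set.mem_ofPred_eq] at hx hy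
    refine hc hxy hx.1 hy.1 ?_
  · rw [hx.2, hy.2]
  · rw [Fin.eq_one_of_ne_zero _ hx.2, Fin.eq_one_of_ne_zero _ hy.2]

variable [Fintype V] [DecidableEq V] [DecidableRel G.Adj]

theorem Adj.disjoint_neighborFinset_of_cliqueFree (htf : G.CliqueFree 3) {u v : V}
    (huv : G.Adj u v) :
    Disjoint (G.neighborFinset u) (G.neighborFinset v) := by
  refine Finset.disjoint_left.2 fun x hu hv => ?_
  rw [mem_neighborFinset] at hu hv
  exact htf {u, v, x} (is3Clique_triple_iff.2 ⟨huv, hu, hv⟩)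

theorem card_edgeFinset_induce_compl_singleton_eq (v : V) :
    #(G.induce ({v}ᶜ : Set V)).edgeFinset = #G.edgeFinset - G.degree v := by
  rw [card_edgeFinset_induce_compl_singleton, card_edgeFinset_deleteIncidenceSet]

theorem edgeFinset_subset_of_isIndepSet_union_eq_compl_singleton (htf : G.CliqueFree 3) {w : V}
    {s t : Finset V} (hcover : s ∪ t = {w}ᶜ) (hs : G.IsIndepSet s) (ht : G.IsIndepSet t) :
    G.edgeFinset ⊆ ((s ×ˢ t \ {x ∈ s | G.Adj w x} ×ˢ {y ∈ t | G.Adj w y}) ∪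
      {w} ×ˢ G.neighborFinset w).image fun p => s(p.1, p.2) := by
  have mem_of_ne : ∀ {x}, x ≠ w → x ∈ s ∨ x ∈ t := fun {x} hx => by
    rw [← mem_union, hcover, mem_compl, mem_singleton]; exact hx
  have hw_edge : ∀ {y}, G.Adj w y → (w, y) ∈ {w} ×ˢ G.neighborFinset w := fun hy =>
    mem_product.2 ⟨mem_singleton_self w, (mem_neighborFinset ..).2 hy⟩
  have hst_edge : ∀ {x y}, x ∈ s → y ∈ t → G.Adj x y →
      (x, y) ∈ s ×ˢ t \ {x ∈ s | G.Adj w x} ×ˢ {y ∈ t | G.Adj w y} := fun hx hy hxy => by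
    refine mem_sdiff.2 ⟨mem_product.2 ⟨hx, hy⟩, fun h => ?_⟩
    obtain ⟨hwx, hwy⟩ := mem_product.1 h
    exact htf _ (is3Clique_triple_iff.2 ⟨(mem_filter.1 hwx).2, (mem_filter.1 hwy).2, hxy⟩)
  intro e he
  induction e using Sym2.ind with | _ x y => ?_
  rw [mem_edgeFinset, mem_edgeSet] at he
  rw [mem_image]
  by_cases hx : x = w
  · exact ⟨(x, y), mem_union_right _ (hx ▸ hw_edge (hx ▸ he)), rfl⟩
  by_cases hy : y = w
  · exact ⟨(y, x), mem_union_right _ (hy ▸ hw_edge (hy ▸ he.symm)), Sym2.eq_swap⟩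
  rcases mem_of_ne hx with hxs | hxt <;> rcases mem_of_ne hy with hys | hyt
  · exact (hs hxs hys he.ne he).elim
  · exact ⟨(x, y), mem_union_left _ (hst_edge hxs hyt he), rfl⟩
  · exact ⟨(y, x), mem_union_left _ (hst_edge hys hxt he.symm), Sym2.eq_swap⟩
  · exact (ht hxt hyt he.ne he).elim

theorem card_edgeFinset_le_mul_add_one_of_isIndepSet_union (htf : G.CliqueFree 3)
    (hG : ¬G.IsBipartite) {w : V} {s t : Finset V} (hcover : s ∪ t = {w}ᶜ)
    (hs : G.IsIndepSet s) (ht : G.IsIndepSet t) : #G.edgeFinset ≤ #s * #t + 1 := by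
  have hcover' : (s : Set V) ∪ t = {w}ᶜ := by
    rw [← coe_union, hcover, coe_compl, coe_singleton]
  set sw := {x ∈ s | G.Adj w x}
  set tw := {y ∈ t | G.Adj w y}
  have hsw : sw.Nonempty := by
    by_contra! h
    refine hG (isBipartite_of_isIndepSet_of_union_eq_compl_singleton ht hs
      (Set.union_comm _ _ ▸ hcover') fun x hx hwx => ?_)
    simpa [sw, h] using (mem_filter.2 ⟨hx, hwx⟩ : x ∈ sw)
  have htw : tw.Nonempty := by
    by_contra! h
    refine hG (isBipartite_of_isIndepSet_of_union_eq_compl_singleton hs ht hcover'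
      fun x hx hwx => ?_)
    simpa [tw, h] using (mem_filter.2 ⟨hx, hwx⟩ : x ∈ tw)
  have hdeg : G.neighborFinset w ⊆ sw ∪ tw := fun x hx => by
    rw [mem_neighborFinset] at hx
    rw [← filter_union, hcover]
    exact mem_filter.2 ⟨by simpa using hx.ne', hx⟩
  have hcount : #G.edgeFinset ≤ (#s * #t - #sw * #tw) + (#sw + #tw) := by
    grw [edgeFinset_subset_of_isIndepSet_union_eq_compl_singleton htf hcover hs ht, card_image_le,
      card_union_le, card_sdiff_of_subset, card_product, card_product, card_product,
      card_singleton, one_mul, hdeg, card_union_le]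
    exact product_subset_product (filter_subset _ _) (filter_subset _ _)
  have hst_le : #sw * #tw ≤ #s * #t :=
    Nat.mul_le_mul (card_le_card (filter_subset _ _)) (card_le_card (filter_subset _ _))
  have : #sw + #tw ≤ #sw * #tw + 1 := by nlinarith [hsw.card_pos, htw.card_pos]
  omega

theorem card_edgeFinset_le_of_isIndepSet_union_eq_compl_singleton (htf : G.CliqueFree 3)
    (hG : ¬G.IsBipartite) {w : V} {s t : Finset V} (hst : Disjoint s t) (hcover : s ∪ t = {w}ᶜ)
    (hs : G.IsIndepSet s) (ht : G.IsIndepSet t) :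
    (#G.edgeFinset : ℝ) ≤ ((Fintype.card V : ℝ) - 1) ^ 2 / 4 + 1 := by
  have hcard : #s + #t + 1 = Fintype.card V := by
    rw [← card_union_of_disjoint hst, hcover, card_compl, card_singleton]
    have := Fintype.card_pos_iff.2 ⟨w⟩
    omega
  have hbound : (#G.edgeFinset : ℝ) ≤ #s * #t + 1 := by
    exact_mod_cast card_edgeFinset_le_mul_add_one_of_isIndepSet_union htf hG hcover hs ht
  rw [← hcard]
  push_cast
  nlinarith [sq_nonneg ((#s : ℝ) - #t)]

theorem exists_isIndepSet_union_eq_compl_singleton_of_forall_le_two_mul_degree_add_one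
    (htf : G.CliqueFree 3) (hG : ¬G.IsBipartite)
    (hdeg : ∀ v, Fintype.card V ≤ 2 * G.degree v + 1) :
    ∃ w, ∃ s t : Finset V, Disjoint s t ∧ s ∪ t = {w}ᶜ ∧ G.IsIndepSet s ∧ G.IsIndepSet t := by
  obtain ⟨u, v, huv⟩ : ∃ u v, G.Adj u v := by
    by_contra! h
    exact hG ⟨Coloring.mk (fun _ => 0) fun hxy => (h _ _ hxy).elim⟩
  have hu := G.isIndepSet_neighborSet_of_triangleFree htf u
  have hv := G.isIndepSet_neighborSet_of_triangleFree htf v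
  rw [← coe_neighborFinset] at hu hv
  have hdisj := huv.disjoint_neighborFinset_of_cliqueFree htf
  by_cases huniv : G.neighborFinset u ∪ G.neighborFinset v = univ
  · refine (hG (isBipartite_of_isIndepSet_of_union_eq_univ hu hv ?_)).elim
    rw [← coe_union, huniv, coe_univ]
  obtain ⟨w, hw⟩ : ∃ w, (G.neighborFinset u ∪ G.neighborFinset v)ᶜ = {w} := by
    have hlt := (card_lt_iff_ne_univ _).2 huniv
    rw [← card_eq_one, card_compl]
    rw [card_union_of_disjoint hdisj, card_neighborFinset_eq_degree,
      card_neighborFinset_eq_degree] at hlt ⊢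
    have := hdeg u
    have := hdeg v
    omega
  exact ⟨w, _, _, hdisj, (compl_eq_comm.1 hw).symm, hu, hv⟩

theorem card_edgeFinset_le_of_cliqueFree_three_of_not_isBipartite (htf : G.CliqueFree 3)
    (hG : ¬G.IsBipartite) : (#G.edgeFinset : ℝ) ≤ ((Fintype.card V : ℝ) - 1) ^ 2 / 4 + 1 := by
  induction hn : Fintype.card V using Nat.strong_induction_on generalizing V with
  | _ n ih =>
  subst hn
  by_cases hdeg : ∀ v, Fintype.card V ≤ 2 * G.degree v + 1
  · obtain ⟨w, s, t, hst, hcover, hs, ht⟩ :=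
      exists_isIndepSet_union_eq_compl_singleton_of_forall_le_two_mul_degree_add_one htf hG hdeg
    exact card_edgeFinset_le_of_isIndepSet_union_eq_compl_singleton htf hG hst hcover hs ht
  push Not at hdeg
  obtain ⟨v, hv⟩ := hdeg
  by_cases hG' : (G.induce ({v}ᶜ : Set V)).IsBipartite
  · obtain ⟨s, t, hst, hcover, hs, ht⟩ := exists_isIndepSet_union_eq_compl_singleton hG'
    exact card_edgeFinset_le_of_isIndepSet_union_eq_compl_singleton htf hG hst hcover hs ht
  have hcard : Fintype.card ({v}ᶜ : Set V) = Fintype.card V - 1 := by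
    rw [Fintype.card_compl_set, Set.card_singleton]
  have hG'_bound := ih _ (by omega) (htf.comap (Embedding.induce _).isContained) hG' hcard
  have hE' : (#(G.induce ({v}ᶜ : Set V)).edgeFinset : ℝ) + G.degree v = #G.edgeFinset := by
    rw [card_edgeFinset_induce_compl_singleton_eq]
    exact_mod_cast Nat.sub_add_cancel (G.degree_le_card_edgeFinset v)
  have hV : ((Fintype.card V - 1 : ℕ) : ℝ) = Fintype.card V - 1 := by
    rw [Nat.cast_sub (by omega), Nat.cast_one]
  have hv' : 2 * (G.degree v : ℝ) + 2 ≤ Fintype.card V := by exact_mod_cast hv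
  rw [hV] at hG'_bound
  nlinarith

end SimpleGraph

/-- A triangle-free graph with `n` vertices and strictly more than `(n−1)²/4 + 1` edges
is bipartite. -/
theorem stmt8 {V : Type*} [Fintype V] (G : SimpleGraph V)
    (htf : G.CliqueFree 3)
    (h : ((Fintype.card V : ℝ) - 1) ^ 2 / 4 + 1 < (G.edgeSet.ncard : ℝ)) :
    G.Colorable 2 := by
  classical
  by_contra hG
  rw [Set.ncard_eq_toFinset_card'] at h
  exact (SimpleGraph.card_edgeFinset_le_of_cliqueFree_three_of_not_isBipartite htf hG).not_gt h
end

section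
/- Let Γ be an incomplete triangle-free graph that is connected with no cut vertex, and let v be a vertex of Γ. If w is a vertex of Γ with lk(w) ⊊ lk(v) (w is a proper satellite of v), then in the link double D°_v(Γ) the two copies (w,0) and (w,1) of w are twins, and more generally the twin module of w in Γ gives rise to a single twin module of D°_v(Γ) of twice the size, namely M_Γ(w)×{0,1}. -/
/-!
Because `lk(w) ⊆ lk(v)`, every neighbour of `w` lies in the glued part of `D°_v(Γ)`, so each
copy of `w`, and likewise each copy of a twin of `w`, is adjacent exactly to the copies of
the vertices of `lk(w)`. Conversely, suppose a copy of `u` has this neighbourhood. Then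
`lk(w) ⊆ lk(u)`; taking a neighbour `y` of `w` (it exists by connectivity), `u` and `v` are
both adjacent to `y`, so triangle-freeness makes them non-adjacent. Hence every neighbour of
`u` has a copy on the same side as the copy of `u` and adjacent to it, which forces
`lk(u) ⊆ lk(w)`.
-/

/-- The link double `D°_v(Γ)`: two copies of `Γ` identified along `lk(v)` (represented by
the copies `(w, false)` for `w ∈ lk(v)`), with both copies of `v` removed. -/
def LinkDouble {V : Type*} (G : SimpleGraph V) (v : V) :
    SimpleGraph {p : V × Bool // p.1 ≠ v ∧ (G.Adj v p.1 → p.2 = false)} where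
  Adj p q := G.Adj p.1.1 q.1.1 ∧ (p.1.2 = q.1.2 ∨ G.Adj v p.1.1 ∨ G.Adj v q.1.1)
  symm := ⟨by
    rintro p q ⟨h1, h2⟩
    refine ⟨h1.symm, ?_⟩
    rcases h2 with h | h | h
    · exact Or.inl h.symm
    · exact Or.inr (Or.inr h)
    · exact Or.inr (Or.inl h)⟩
  loopless := ⟨fun p h => G.irrefl h.1⟩

namespace LinkDouble

variable {V : Type*} {G : SimpleGraph V} {v w : V}

abbrev Vertex (G : SimpleGraph V) (v : V) : Type _ :=
  {p : V × Bool // p.1 ≠ v ∧ (G.Adj v p.1 → p.2 = false)}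

theorem neighborSet_eq_of_neighborSet_subset (hsub : G.neighborSet w ⊆ G.neighborSet v)
    {p : Vertex G v} (hp : p.1.1 = w) :
    (LinkDouble G v).neighborSet p = {r | r.1.1 ∈ G.neighborSet w} := by
  subst hp
  ext r
  exact ⟨And.left, fun h => ⟨h, Or.inr (Or.inr (hsub h))⟩⟩

theorem neighborSet_fst_eq_of_neighborSet_eq (htf : G.CliqueFree 3)
    (hsub : G.neighborSet w ⊆ G.neighborSet v) {y : V} (hy : G.Adj w y) {q : Vertex G v}
    (hq : (LinkDouble G v).neighborSet q = {r | r.1.1 ∈ G.neighborSet w}) :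
    G.neighborSet q.1.1 = G.neighborSet w := by
  have hmem (r : Vertex G v) : (LinkDouble G v).Adj q r ↔ G.Adj w r.1.1 := Set.ext_iff.1 hq r
  have lk_w_subset (x : V) (hx : G.Adj w x) : G.Adj q.1.1 x :=
    ((hmem ⟨(x, false), (G.ne_of_adj (hsub hx)).symm, fun _ => rfl⟩).2 hx).1
  have not_adj_v : ¬ G.Adj v q.1.1 :=
    SimpleGraph.isIndepSet_neighborSet_of_triangleFree _ htf y (hsub hy).symm
      (lk_w_subset y hy).symm q.2.1.symm
  have lk_subset_w (x : V) (hx : G.Adj q.1.1 x) : G.Adj w x := by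
    have hxv : x ≠ v := by
      rintro rfl
      exact not_adj_v hx.symm
    by_cases hvx : G.Adj v x
    · exact (hmem ⟨(x, false), hxv, fun _ => rfl⟩).1 ⟨hx, Or.inr (Or.inr hvx)⟩
    · exact (hmem ⟨(x, q.1.2), hxv, fun h => absurd h hvx⟩).1 ⟨hx, Or.inl rfl⟩
  ext x
  exact ⟨lk_subset_w x, lk_w_subset x⟩

end LinkDouble

theorem stmt10_general {V : Type*} (G : SimpleGraph V)
    (htf : G.CliqueFree 3)
    (hconn : G.Connected)
    (v w : V) (hw : G.neighborSet w ⊂ G.neighborSet v) :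
    (∀ p q : {p : V × Bool // p.1 ≠ v ∧ (G.Adj v p.1 → p.2 = false)},
        p.1.1 = w → q.1.1 = w →
        (LinkDouble G v).neighborSet p = (LinkDouble G v).neighborSet q) ∧
    (∀ p : {p : V × Bool // p.1 ≠ v ∧ (G.Adj v p.1 → p.2 = false)}, p.1.1 = w →
      ∀ q : {p : V × Bool // p.1 ≠ v ∧ (G.Adj v p.1 → p.2 = false)},
        ((LinkDouble G v).neighborSet q = (LinkDouble G v).neighborSet p ↔
          G.neighborSet q.1.1 = G.neighborSet w)) := by
  have hwv : w ≠ v := by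
    rintro rfl
    exact hw.ne rfl
  have : Nontrivial V := nontrivial_of_ne w v hwv
  obtain ⟨y, hy⟩ := hconn.preconnected.exists_adj_of_nontrivial w
  have copies_of_w {p : LinkDouble.Vertex G v} (hp : p.1.1 = w) :=
    LinkDouble.neighborSet_eq_of_neighborSet_subset hw.subset hp
  refine ⟨fun p q hp hq => (copies_of_w hp).trans (copies_of_w hq).symm,
    fun p hp q => ⟨fun h => ?_, fun h => ?_⟩⟩
  · exact LinkDouble.neighborSet_fst_eq_of_neighborSet_eq htf hw.subset hy
      (h.trans (copies_of_w hp))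
  · rw [copies_of_w hp, LinkDouble.neighborSet_eq_of_neighborSet_subset (h ▸ hw.subset) rfl, h]

/-- Let `Γ` be an incomplete triangle-free graph, connected without cut vertices, and let
`w` be a proper satellite of `v` (`lk(w) ⊊ lk(v)`). Then in `D°_v(Γ)` the two copies of
`w` are twins, and the twin module of `(w,0)` in `D°_v(Γ)` is exactly `M_Γ(w) × {0,1}`. -/
theorem stmt10 {V : Type*} [Fintype V] (G : SimpleGraph V)
    (hinc : ∃ x y : V, x ≠ y ∧ ¬ G.Adj x y)
    (htf : G.CliqueFree 3)
    (hconn : G.Connected)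
    (hnocut : ∀ u : V, (G.induce {x : V | x ≠ u}).Connected)
    (v w : V) (hw : G.neighborSet w ⊂ G.neighborSet v) :
    (∀ p q : {p : V × Bool // p.1 ≠ v ∧ (G.Adj v p.1 → p.2 = false)},
        p.1.1 = w → q.1.1 = w →
        (LinkDouble G v).neighborSet p = (LinkDouble G v).neighborSet q) ∧
    (∀ p : {p : V × Bool // p.1 ≠ v ∧ (G.Adj v p.1 → p.2 = false)}, p.1.1 = w →
      ∀ q : {p : V × Bool // p.1 ≠ v ∧ (G.Adj v p.1 → p.2 = false)},
        ((LinkDouble G v).neighborSet q = (LinkDouble G v).neighborSet p ↔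
          G.neighborSet q.1.1 = G.neighborSet w)) :=
  stmt10_general G htf hconn v w hw
end

section
/- Let W_Γ be a right-angled Coxeter group with Davis complex Σ_Γ, and let A, B be subsets of the vertices of Γ with Σ_B ⊆ Σ_A. Then Σ_A and Σ_B are at finite Hausdorff distance if and only if A = B ∪ C with C a clique all of whose vertices are adjacent to every vertex of B and to each other (i.e., A is the join B * C of B with a clique C). -/
/-- The defining relators of the right-angled Coxeter group on `G`: squares of generators
and commutators of adjacent generators. -/
def racgRels {V : Type*} (G : SimpleGraph V) : Set (FreeGroup V) :=
  {r | (∃ v : V, r = FreeGroup.of v * FreeGroup.of v) ∨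
    (∃ v w : V, G.Adj v w ∧
      r = FreeGroup.of v * FreeGroup.of w * (FreeGroup.of v)⁻¹ * (FreeGroup.of w)⁻¹)}

/-- The right-angled Coxeter group `W_Γ`. -/
abbrev RACG {V : Type*} (G : SimpleGraph V) := PresentedGroup (racgRels G)

/-- The standard generator of `W_Γ` corresponding to a vertex. -/
def racgGen {V : Type*} (G : SimpleGraph V) (v : V) : RACG G := PresentedGroup.of v

/-- `g` has word length at most `n` with respect to the standard generators
(each of which is its own inverse). -/
def racgWordLenLe {V : Type*} (G : SimpleGraph V) (n : ℕ) (g : RACG G) : Prop :=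
  ∃ l : List V, l.length ≤ n ∧ (l.map (racgGen G)).prod = g

/-!
If `A = B ∪ C` with `C` a clique joined to `B`, then `W_A = W_B · W_C` where `W_C` is generated by
pairwise commuting involutions, so each element of `W_C` is a product of distinct generators of
`C` and every element of `W_A` lies within `|V|` of `W_B`.

Conversely, if `u ∈ A \ B` is not adjacent to some other `v ∈ A`, retract `W_Γ` onto
`W_{u,v} ≅ D_∞` by `u ↦ sr 1`, `v ↦ sr 0` and all other generators `↦ 1`. The index `i` of
`r i`, `sr i` changes by at most one per generator, and is unchanged by left multiplication with
the image of `W_B ⊆ {1, sr 0}`. Since `(v u)ⁿ ↦ r n`, the element `(v u)ⁿ ∈ W_A` is at distance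
at least `n` from `W_B`.
-/

section RightAngledCoxeterGroup

variable {V : Type*} {G : SimpleGraph V}

theorem racgGen_mul_self (v : V) : racgGen G v * racgGen G v = 1 := by
  have := PresentedGroup.one_of_mem (rels := racgRels G) (Or.inl ⟨v, rfl⟩)
  rwa [map_mul] at this

theorem racgGen_inv (v : V) : (racgGen G v)⁻¹ = racgGen G v :=
  inv_eq_of_mul_eq_one_right (racgGen_mul_self v)

theorem racgGen_commute {v w : V} (h : G.Adj v w) : Commute (racgGen G v) (racgGen G w) := by
  have := PresentedGroup.one_of_mem (rels := racgRels G) (Or.inr ⟨v, w, h, rfl⟩)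
  simp only [map_mul, map_inv] at this
  exact commutatorElement_eq_one_iff_commute.mp this

theorem racgRels_lift_eq_one {H : Type*} [Group H] {f : V → H} (hsq : ∀ v, f v * f v = 1)
    (hcomm : ∀ v w, G.Adj v w → Commute (f v) (f w)) :
    ∀ r ∈ racgRels G, FreeGroup.lift f r = 1 := by
  rintro r (⟨v, rfl⟩ | ⟨v, w, hvw, rfl⟩)
  · simp [hsq v]
  · simp [(hcomm v w hvw).eq]

def racgLift {H : Type*} [Group H] (f : V → H) (hsq : ∀ v, f v * f v = 1)
    (hcomm : ∀ v w, G.Adj v w → Commute (f v) (f w)) : RACG G →* H :=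
  PresentedGroup.toGroup (racgRels_lift_eq_one hsq hcomm)

@[simp]
theorem racgLift_racgGen {H : Type*} [Group H] (f : V → H) (hsq : ∀ v, f v * f v = 1)
    (hcomm : ∀ v w, G.Adj v w → Commute (f v) (f w)) (v : V) :
    racgLift f hsq hcomm (racgGen G v) = f v :=
  PresentedGroup.toGroup.of _

theorem exists_list_of_mem_closure_racgGen {S : Set V} {g : RACG G}
    (hg : g ∈ Subgroup.closure (racgGen G '' S)) :
    ∃ l : List V, (∀ x ∈ l, x ∈ S) ∧ (l.map (racgGen G)).prod = g := by
  induction hg using Subgroup.closure_induction with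
  | mem _ hx =>
    obtain ⟨v, hv, rfl⟩ := hx
    exact ⟨[v], by simpa using hv, by simp⟩
  | one => exact ⟨[], by simp, rfl⟩
  | mul _ _ _ _ ih₁ ih₂ =>
    obtain ⟨l₁, hl₁, rfl⟩ := ih₁
    obtain ⟨l₂, hl₂, rfl⟩ := ih₂
    exact ⟨l₁ ++ l₂, fun x hx ↦ (List.mem_append.mp hx).elim (hl₁ x) (hl₂ x), by simp⟩
  | inv _ _ ih =>
    obtain ⟨l, hl, rfl⟩ := ih
    exact ⟨l.reverse, by simpa using hl, by
      simp [List.prod_inv_reverse, Function.comp_def, racgGen_inv]⟩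

theorem racgGen_commute_of_isClique {C : Set V} (hC : G.IsClique C) {x y : V} (hx : x ∈ C)
    (hy : y ∈ C) : Commute (racgGen G x) (racgGen G y) := by
  obtain rfl | hxy := eq_or_ne x y
  · exact Commute.refl _
  · exact racgGen_commute (hC hx hy hxy)

theorem exists_nodup_list_prod_eq_of_isClique {C : Set V} (hC : G.IsClique C) {l : List V}
    (hl : ∀ x ∈ l, x ∈ C) :
    ∃ l' : List V, l'.Nodup ∧ (∀ x ∈ l', x ∈ C) ∧
      (l'.map (racgGen G)).prod = (l.map (racgGen G)).prod := by
  classical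
  induction l with
  | nil => exact ⟨[], List.nodup_nil, by simp, rfl⟩
  | cons a t ih =>
    obtain ⟨t', ht'nd, ht'C, ht'⟩ := ih fun x hx ↦ hl x (List.mem_cons_of_mem a hx)
    have haC : a ∈ C := hl a List.mem_cons_self
    rw [List.map_cons, List.prod_cons, ← ht']
    by_cases hat : a ∈ t'
    · refine ⟨t'.erase a, ht'nd.erase a, fun x hx ↦ ht'C x (List.mem_of_mem_erase hx), ?_⟩
      have hcomm : (t'.map (racgGen G)).Pairwise Commute :=
        List.pairwise_map.2 <| List.pairwise_of_forall_mem_list fun x hx y hy ↦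
          racgGen_commute_of_isClique hC (ht'C x hx) (ht'C y hy)
      rw [((List.perm_cons_erase hat).map (racgGen G)).prod_eq' hcomm, List.map_cons,
        List.prod_cons, ← mul_assoc, racgGen_mul_self, one_mul]
    · refine ⟨a :: t', List.nodup_cons.mpr ⟨hat, ht'nd⟩, ?_, by simp⟩
      simpa [haC] using ht'C

theorem racgWordLenLe_card_of_mem_closure_isClique [Fintype V] {C : Set V} (hC : G.IsClique C)
    {g : RACG G} (hg : g ∈ Subgroup.closure (racgGen G '' C)) :
    racgWordLenLe G (Fintype.card V) g := by
  obtain ⟨l, hl, rfl⟩ := exists_list_of_mem_closure_racgGen hg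
  obtain ⟨l', hnd, -, hl'⟩ := exists_nodup_list_prod_eq_of_isClique hC hl
  exact ⟨l', hnd.length_le_card, hl'⟩

open scoped Pointwise in
theorem coe_closure_racgGen_union_of_adj {B C : Set V} (hBC : ∀ c ∈ C, ∀ b ∈ B, G.Adj c b) :
    (Subgroup.closure (racgGen G '' (B ∪ C)) : Set (RACG G)) =
      (Subgroup.closure (racgGen G '' B) : Set (RACG G)) * Subgroup.closure (racgGen G '' C) := by
  rw [Set.image_union, Subgroup.closure_union]
  refine Subgroup.coe_mul_of_right_le_normalizer_left _ _
    (le_trans ?_ (Subgroup.centralizer_le_normalizer _))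
  rw [Subgroup.centralizer_closure, Subgroup.closure_le]
  rintro _ ⟨c, hc, rfl⟩ _ ⟨b, hb, rfl⟩
  exact (racgGen_commute (hBC c hc b hb)).eq.symm

end RightAngledCoxeterGroup

open DihedralGroup

def dihedralIndex : DihedralGroup 0 → ℤ
  | r i => i
  | sr i => i

@[simp]
theorem dihedralIndex_one : dihedralIndex 1 = 0 := rfl

theorem dihedralIndex_sr_zero_mul (x : DihedralGroup 0) :
    dihedralIndex (sr 0 * x) = dihedralIndex x := by
  cases x <;> simp only [sr_mul_r, sr_mul_sr, zero_add, sub_zero] <;> rfl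

theorem abs_dihedralIndex_sr_one_mul_le (x : DihedralGroup 0) :
    |dihedralIndex (sr 1 * x)| ≤ |dihedralIndex x| + 1 := by
  cases x with
  | r i => exact (abs_add_le (1 : ℤ) i).trans_eq (add_comm _ _)
  | sr i => exact (abs_sub (show ℤ from i) 1).trans_eq (by rw [abs_one]; rfl)

theorem dihedralIndex_r_one_pow (n : ℕ) : dihedralIndex (r 1 ^ n) = n := by
  rw [r_one_pow]; rfl

section RetractionToDihedral

variable {V : Type*} {G : SimpleGraph V} [DecidableEq V] {u v : V} (huv : ¬G.Adj u v)

/-- The retraction of `W_Γ` onto the special subgroup `W_{u,v}`, identified with the infinite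
dihedral group: it kills every generator other than `u` and `v`. -/
def racgToDihedral : RACG G →* DihedralGroup 0 :=
  racgLift (fun w ↦ if w = u then sr 1 else if w = v then sr 0 else 1)
    (fun w ↦ by split_ifs <;> simp)
    -- adjacent `a ≠ b` are never `{u, v}`, so one of them is sent to `1`
    (fun a b hab ↦ by
      split_ifs <;> subst_vars <;> first
        | exact Commute.refl _ | exact Commute.one_left _ | exact Commute.one_right _
        | exact absurd hab huv | exact absurd hab.symm huv)

include huv in
theorem abs_dihedralIndex_racgToDihedral_mul_le (w : V) (x : DihedralGroup 0) :
    |dihedralIndex (racgToDihedral huv (racgGen G w) * x)| ≤ |dihedralIndex x| + 1 := by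
  simp only [racgToDihedral, racgLift_racgGen]
  split_ifs
  · exact abs_dihedralIndex_sr_one_mul_le x
  · rw [dihedralIndex_sr_zero_mul]; linarith
  · rw [one_mul]; linarith

theorem abs_dihedralIndex_racgToDihedral_list_prod_le (l : List V) :
    |dihedralIndex (racgToDihedral huv (l.map (racgGen G)).prod)| ≤ l.length := by
  induction l with
  | nil => simp
  | cons w t ih =>
    rw [List.map_cons, List.prod_cons, map_mul, List.length_cons, Nat.cast_succ]
    exact (abs_dihedralIndex_racgToDihedral_mul_le huv w _).trans (by linarith)

theorem abs_dihedralIndex_racgToDihedral_le {N : ℕ} {g : RACG G} (hg : racgWordLenLe G N g) :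
    |dihedralIndex (racgToDihedral huv g)| ≤ N := by
  obtain ⟨l, hlN, rfl⟩ := hg
  exact (abs_dihedralIndex_racgToDihedral_list_prod_le huv l).trans (by exact_mod_cast hlN)

theorem dihedralIndex_racgToDihedral_mul_of_mem {B : Set V} (huB : u ∉ B) {h : RACG G}
    (hh : h ∈ Subgroup.closure (racgGen G '' B)) (x : DihedralGroup 0) :
    dihedralIndex (racgToDihedral huv h * x) = dihedralIndex x := by
  induction hh using Subgroup.closure_induction generalizing x with
  | mem _ hb =>
    obtain ⟨b, hb, rfl⟩ := hb
    simp only [racgToDihedral, racgLift_racgGen, if_neg (ne_of_mem_of_not_mem hb huB)]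
    split_ifs
    · exact dihedralIndex_sr_zero_mul x
    · rw [one_mul]
  | one => rw [map_one, one_mul]
  | mul _ _ _ _ ih₁ ih₂ => rw [map_mul, mul_assoc, ih₁, ih₂]
  | inv g _ ih => simpa using (ih ((racgToDihedral huv g)⁻¹ * x)).symm

end RetractionToDihedral

theorem adj_of_forall_exists_racgWordLenLe {V : Type*} {G : SimpleGraph V} {A B : Set V}
    {N : ℕ} (hN : ∀ g ∈ Subgroup.closure (racgGen G '' A),
      ∃ h ∈ Subgroup.closure (racgGen G '' B), racgWordLenLe G N (h⁻¹ * g))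
    {u v : V} (hu : u ∈ A) (hv : v ∈ A) (huB : u ∉ B) (hne : u ≠ v) : G.Adj u v := by
  classical
  by_contra huv
  obtain ⟨h, hh, hhg⟩ := hN ((racgGen G v * racgGen G u) ^ (N + 1)) <| pow_mem (mul_mem
    (Subgroup.subset_closure (Set.mem_image_of_mem _ hv))
    (Subgroup.subset_closure (Set.mem_image_of_mem _ hu))) _
  have hfar : dihedralIndex (racgToDihedral huv (h⁻¹ * (racgGen G v * racgGen G u) ^ (N + 1)))
      = N + 1 := by
    rw [map_mul, dihedralIndex_racgToDihedral_mul_of_mem huv huB (inv_mem hh), map_pow, map_mul]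
    simp only [racgToDihedral, racgLift_racgGen, if_pos, if_neg hne.symm, sr_mul_sr,
      sub_zero, dihedralIndex_r_one_pow, Nat.cast_succ]
  have hnear := abs_dihedralIndex_racgToDihedral_le huv hhg
  rw [hfar, abs_of_nonneg (by positivity)] at hnear
  omega

/-- For a RACG with `Σ_B ⊆ Σ_A` (i.e. `B ⊆ A`), the standard subcomplexes `Σ_A` and
`Σ_B` (vertex sets: the special subgroups `W_A`, `W_B`, with the word metric of `W_Γ`)
are at finite Hausdorff distance iff `A = B * C` for a clique `C` joined to `B`. -/
theorem stmt15 {V : Type*} [Fintype V] (G : SimpleGraph V) (A B : Set V) (hBA : B ⊆ A) :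
    (∃ C : ℕ,
      (∀ g ∈ Subgroup.closure (racgGen G '' A),
        ∃ h ∈ Subgroup.closure (racgGen G '' B), racgWordLenLe G C (h⁻¹ * g)) ∧
      (∀ h ∈ Subgroup.closure (racgGen G '' B),
        ∃ g ∈ Subgroup.closure (racgGen G '' A), racgWordLenLe G C (h⁻¹ * g))) ↔
    (∃ C : Set V, A = B ∪ C ∧ Disjoint B C ∧
      (∀ c ∈ C, ∀ c' ∈ C, c ≠ c' → G.Adj c c') ∧
      (∀ c ∈ C, ∀ b ∈ B, G.Adj c b)) := by
  constructor
  · rintro ⟨N, hN, -⟩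
    refine ⟨A \ B, (Set.union_sdiff_cancel hBA).symm, disjoint_sdiff_self_right, ?_, ?_⟩
    · rintro c ⟨hcA, hcB⟩ c' ⟨hc'A, -⟩ hne
      exact adj_of_forall_exists_racgWordLenLe hN hcA hc'A hcB hne
    · rintro c ⟨hcA, hcB⟩ b hb
      exact adj_of_forall_exists_racgWordLenLe hN hcA (hBA hb) hcB
        (ne_of_mem_of_not_mem hb hcB).symm
  · rintro ⟨C, rfl, -, hC, hBC⟩
    refine ⟨Fintype.card V, fun g hg ↦ ?_, fun h hh ↦ ?_⟩
    · rw [← SetLike.mem_coe, coe_closure_racgGen_union_of_adj hBC] at hg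
      obtain ⟨h, hh, k, hk, rfl⟩ := hg
      refine ⟨h, hh, ?_⟩
      simpa only [inv_mul_cancel_left] using racgWordLenLe_card_of_mem_closure_isClique hC hk
    · refine ⟨h, Subgroup.closure_mono (Set.image_mono Set.subset_union_left) hh, [], ?_⟩
      simp
end

section
/- Let Γ be an incomplete, triangle-free CFS graph and suppose C is a cut set of Γ that is either a pair of non-adjacent vertices {a,b} or a 2-path a–c–b (a, b non-adjacent with common neighbor c) such that Γ∖C is disconnected. Then every connected component of Γ∖C contains a vertex lying in lk(a) ∩ lk(b). -/
namespace DiagAdj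

variable {V : Type*} {G : SimpleGraph V} {p q : V × V}

theorem symm (h : DiagAdj G p q) : DiagAdj G q p := by
  obtain ⟨hp, hq, h₁, h₂, h₃, h₄, hnp, hnq⟩ := h
  exact ⟨hq, hp, h₁.symm, h₄.symm, h₃.symm, h₂.symm, hnq, hnp⟩

instance : Std.Symm (DiagAdj G) := ⟨fun _ _ => symm⟩

theorem adj {z z' : V} (h : DiagAdj G p q) (hz : z = p.1 ∨ z = p.2) (hz' : z' = q.1 ∨ z' = q.2) :
    G.Adj z z' := by
  obtain ⟨-, -, h₁, h₂, h₃, h₄, -, -⟩ := h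
  rcases hz with rfl | rfl <;> rcases hz' with rfl | rfl
  exacts [h₁, h₄.symm, h₂.symm, h₃]

theorem not_isCone (htf : G.CliqueFree 3) (h : DiagAdj G p q) (v : V) : ¬ IsCone G v := by
  classical
  intro hv
  obtain ⟨hp, hq, h₁, -, -, -, hnp, hnq⟩ := h
  by_cases e₁ : v = p.1
  · exact hnp (e₁ ▸ hv p.2 (e₁ ▸ hp.symm))
  by_cases e₂ : v = q.1
  · exact hnq (e₂ ▸ hv q.2 (e₂ ▸ hq.symm))
  exact htf {v, p.1, q.1} (SimpleGraph.is3Clique_triple_iff.mpr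
    ⟨hv p.1 (Ne.symm e₁), hv q.1 (Ne.symm e₂), h₁⟩)

theorem exists_of_reflTransGen {p₀ q₀ : V × V} (h₀ : DiagAdj G p₀ q₀)
    (h : Relation.ReflTransGen (DiagAdj G) p₀ q) : ∃ r, DiagAdj G q r := by
  rcases h.cases_tail with rfl | ⟨m, -, hm⟩
  exacts [⟨q₀, h₀⟩, ⟨m, hm.symm⟩]

end DiagAdj

section Outside

variable {V : Type*} (G : SimpleGraph V) (C : Set V)

def AdjOutside (u w : V) : Prop := u ∉ C ∧ w ∉ C ∧ G.Adj u w

instance : Std.Symm (AdjOutside G C) := ⟨fun _ _ h => ⟨h.2.1, h.1, h.2.2.symm⟩⟩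

def MeetsComponent (u : V) (q : V × V) : Prop :=
  ∃ z, (z = q.1 ∨ z = q.2) ∧ z ∉ C ∧ Relation.ReflTransGen (AdjOutside G C) u z

variable {G C} {a b u : V}

theorem eq_pair_of_not_adj_of_mem
    (hC : C = {a, b} ∨ ∃ c : V, G.Adj a c ∧ G.Adj c b ∧ C = {a, b, c}) :
    ∀ s ∈ C, ∀ t ∈ C, s ≠ t → ¬ G.Adj s t → s = a ∧ t = b ∨ s = b ∧ t = a := by
  intro s hs t ht hst hn
  rcases hC with rfl | ⟨c, hac, hcb, rfl⟩
  · simp only [Set.mem_insert_iff, Set.mem_singleton_iff] at hs ht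
    rcases hs with rfl | rfl <;> rcases ht with rfl | rfl <;> tauto
  · simp only [Set.mem_insert_iff, Set.mem_singleton_iff] at hs ht
    rcases hs with rfl | rfl | rfl <;> rcases ht with rfl | rfl | rfl <;> tauto

variable
    (hC : ∀ s ∈ C, ∀ t ∈ C, s ≠ t → ¬ G.Adj s t → s = a ∧ t = b ∨ s = b ∧ t = a)
    (hnoCommon : ¬ ∃ y, Relation.ReflTransGen (AdjOutside G C) u y ∧ G.Adj a y ∧ G.Adj b y)
include hC hnoCommon

theorem MeetsComponent.of_diagAdj {q r : V × V} (h : DiagAdj G q r)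
    (hq : MeetsComponent G C u q) : MeetsComponent G C u r := by
  obtain ⟨z, hzq, hzC, hz⟩ := hq
  by_cases hr : r.1 ∈ C ∧ r.2 ∈ C
  · refine absurd ?_ hnoCommon
    have h₁ := h.adj hzq (Or.inl rfl)
    have h₂ := h.adj hzq (Or.inr rfl)
    obtain ⟨-, hne, -, -, -, -, -, hnadj⟩ := h
    rcases hC _ hr.1 _ hr.2 hne hnadj with ⟨ha, hb⟩ | ⟨hb, ha⟩
    · exact ⟨z, hz, ha ▸ h₁.symm, hb ▸ h₂.symm⟩
    · exact ⟨z, hz, ha ▸ h₂.symm, hb ▸ h₁.symm⟩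
  · obtain ⟨z', hz'r, hz'C⟩ : ∃ z', (z' = r.1 ∨ z' = r.2) ∧ z' ∉ C := by
      rcases not_and_or.mp hr with h' | h'
      exacts [⟨_, Or.inl rfl, h'⟩, ⟨_, Or.inr rfl, h'⟩]
    exact ⟨z', hz'r, hz'C, hz.tail ⟨hzC, hz'C, h.adj hzq hz'r⟩⟩

theorem MeetsComponent.of_reflTransGen {q r : V × V}
    (h : Relation.ReflTransGen (DiagAdj G) q r) (hq : MeetsComponent G C u q) :
    MeetsComponent G C u r := by
  induction h with
  | refl => exact hq
  | tail _ hstep ih => exact .of_diagAdj hC hnoCommon hstep ih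

theorem reflTransGen_adjOutside_of_cfs (htf : G.CliqueFree 3) (hcfs : CFS G) (hu : u ∉ C) {w : V}
    (hw : w ∉ C) : Relation.ReflTransGen (AdjOutside G C) u w := by
  obtain ⟨p₀, ⟨q₀, h₀⟩, hsupp⟩ := hcfs
  obtain ⟨qu, hqu, hu'⟩ := hsupp u (h₀.not_isCone htf u)
  obtain ⟨qw, hqw, hw'⟩ := hsupp w (h₀.not_isCone htf w)
  obtain ⟨r, hr⟩ := DiagAdj.exists_of_reflTransGen h₀ hqw
  have hchain : Relation.ReflTransGen (DiagAdj G) qu r := ((symm hqu).trans hqw).tail hr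
  obtain ⟨z, hzr, hzC, hz⟩ :=
    MeetsComponent.of_reflTransGen hC hnoCommon hchain ⟨u, hu', hu, .refl⟩
  exact hz.tail ⟨hzC, hw, (hr.adj hw' hzr).symm⟩

end Outside

theorem stmt18_general {V : Type*} (G : SimpleGraph V)
    (htf : G.CliqueFree 3)
    (hcfs : CFS G)
    (a b : V) (C : Set V)
    (hC : C = {a, b} ∨ ∃ c : V, G.Adj a c ∧ G.Adj c b ∧ C = {a, b, c})
    (hdisc : ∃ x y : V, x ∉ C ∧ y ∉ C ∧
      ¬ Relation.ReflTransGen (fun u w : V => u ∉ C ∧ w ∉ C ∧ G.Adj u w) x y) :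
    ∀ x ∉ C, ∃ y : V,
      Relation.ReflTransGen (fun u w : V => u ∉ C ∧ w ∉ C ∧ G.Adj u w) x y ∧
      G.Adj a y ∧ G.Adj b y := by
  intro x hx
  obtain ⟨x₀, y₀, hx₀, hy₀, hsep⟩ := hdisc
  by_contra hnoCommon
  have hreach := fun w (hw : w ∉ C) =>
    reflTransGen_adjOutside_of_cfs (eq_pair_of_not_adj_of_mem hC) hnoCommon htf hcfs hx hw
  exact hsep ((symm (hreach x₀ hx₀)).trans (hreach y₀ hy₀))

/-- Let `Γ` be an incomplete triangle-free CFS graph and let `C` be either a non-adjacent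
cut pair `{a,b}` or a cut 2-path `a–c–b`, with `Γ∖C` disconnected. Then every connected
component of `Γ∖C` contains a vertex of `lk(a) ∩ lk(b)`. -/
theorem stmt18 {V : Type*} [Fintype V] (G : SimpleGraph V)
    (hinc : ∃ v w : V, v ≠ w ∧ ¬ G.Adj v w)
    (htf : G.CliqueFree 3)
    (hcfs : CFS G)
    (a b : V) (hab : a ≠ b) (hnadj : ¬ G.Adj a b) (C : Set V)
    (hC : C = {a, b} ∨ ∃ c : V, G.Adj a c ∧ G.Adj c b ∧ C = {a, b, c})
    (hdisc : ∃ x y : V, x ∉ C ∧ y ∉ C ∧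
      ¬ Relation.ReflTransGen (fun u w : V => u ∉ C ∧ w ∉ C ∧ G.Adj u w) x y) :
    ∀ x ∉ C, ∃ y : V,
      Relation.ReflTransGen (fun u w : V => u ∉ C ∧ w ∉ C ∧ G.Adj u w) x y ∧
      G.Adj a y ∧ G.Adj b y :=
  stmt18_general G htf hcfs a b C hC hdisc
end
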